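/- arXiv:1305.3102 — 3 statements merged into one kernel-verified Lean document; each statement's English description precedes it below -/
import Mathlib

section
/- For any graph G and any positive integer k, the pathwidth of the inflation G ⋄ k satisfies pw(G ⋄ k) + 1 = k · (pw(G) + 1). -/
open SimpleGraph

/-- A path decomposition of a graph `G`: a finite sequence of bags covering all
vertices and edges, in which each vertex occurs in a consecutive set of bags. -/
structure PathDecomp {V : Type*} (G : SimpleGraph V) where
  n : ℕ
  bag : Fin n → Finset V
  mem_bag : ∀ v : V, ∃ i, v ∈ bag i
  adj_bag : ∀ u v : V, G.Adj u v → ∃ i, u ∈ bag i ∧ v ∈ bag i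
  convex : ∀ v : V, ∀ i j l : Fin n, i ≤ j → j ≤ l → v ∈ bag i → v ∈ bag l → v ∈ bag j

/-- The width of a path decomposition: maximum bag size minus one. -/
def PathDecomp.width {V : Type*} {G : SimpleGraph V} (P : PathDecomp G) : ℕ :=
  (Finset.univ.sup fun i => (P.bag i).card) - 1

/-- Pathwidth: the minimum width over all path decompositions. -/
noncomputable def pathwidth {V : Type*} (G : SimpleGraph V) : ℕ :=
  sInf {w | ∃ P : PathDecomp G, P.width = w}

/-- The inflation `G ⋄ k`: each vertex is replaced by a `k`-clique, with complete
connections between the cliques of adjacent vertices. -/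
def inflate {V : Type*} (G : SimpleGraph V) (k : ℕ) : SimpleGraph (V × Fin k) :=
  SimpleGraph.fromRel fun x y => x.1 = y.1 ∨ G.Adj x.1 y.1

/-!
Bags of a path decomposition of `G` blow up to bags of `G ⋄ k` by taking all `k` copies of each
vertex, which multiplies every bag size by `k`. Conversely, the `k` copies of a vertex, and the
`2k` copies of the ends of an edge, form cliques of `G ⋄ k`, and every clique lies in a single
bag; so keeping, in each bag of a decomposition of `G ⋄ k`, the vertices all of whose copies it
contains gives a decomposition of `G` whose bags are at most `1/k` as large.
-/

open Finset

lemma inflate_adj {V : Type*} {G : SimpleGraph V} {k : ℕ} {x y : V × Fin k} :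
    (inflate G k).Adj x y ↔ x ≠ y ∧ (x.1 = y.1 ∨ G.Adj x.1 y.1) := by
  simp only [inflate, fromRel_adj]
  constructor
  · rintro ⟨hne, (h | h) | (h | h)⟩
    exacts [⟨hne, .inl h⟩, ⟨hne, .inr h⟩, ⟨hne, .inl h.symm⟩, ⟨hne, .inr h.symm⟩]
  · rintro ⟨hne, h⟩
    exact ⟨hne, .inl h⟩

lemma SimpleGraph.IsClique.inflate {V : Type*} {G : SimpleGraph V} {s : Set V}
    (hs : G.IsClique s) (k : ℕ) :
    (_root_.inflate G k).IsClique (s ×ˢ Set.univ) := by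
  rintro x hx y hy hxy
  refine inflate_adj.2 ⟨hxy, ?_⟩
  by_cases h : x.1 = y.1
  exacts [.inl h, .inr (hs hx.1 hy.1 h)]

section fullFibers

variable {V : Type*} {k : ℕ}

open scoped Classical in
noncomputable def fullFibers (t : Finset (V × Fin k)) : Finset V :=
  {v ∈ t.image Prod.fst | ∀ a, (v, a) ∈ t}

lemma mem_fullFibers (hk : 0 < k) {t : Finset (V × Fin k)} {v : V} :
    v ∈ fullFibers t ↔ ∀ a, (v, a) ∈ t := by
  classical
  simp only [fullFibers, mem_filter, mem_image, and_iff_right_iff_imp]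
  exact fun h => ⟨_, h ⟨0, hk⟩, rfl⟩

lemma mul_card_fullFibers_le (hk : 0 < k) (t : Finset (V × Fin k)) :
    k * #(fullFibers t) ≤ #t := by
  have hsub : fullFibers t ×ˢ univ ⊆ t := fun x hx =>
    (mem_fullFibers hk).1 (mem_product.1 hx).1 x.2
  simpa [mul_comm] using card_le_card hsub

end fullFibers

namespace PathDecomp

variable {V : Type*} {G : SimpleGraph V}

lemma width_add_one [Nonempty V] (P : PathDecomp G) :
    P.width + 1 = univ.sup fun i => #(P.bag i) := by
  obtain ⟨i, hi⟩ := P.mem_bag (Classical.arbitrary V)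
  have : 1 ≤ univ.sup fun i => #(P.bag i) :=
    (card_pos.2 ⟨_, hi⟩).trans_le (le_sup (f := fun i => #(P.bag i)) (mem_univ i))
  unfold width
  omega

lemma mul_width_add_one [Nonempty V] (P : PathDecomp G) (k : ℕ) :
    k * (P.width + 1) = univ.sup fun i => k * #(P.bag i) := by
  rw [width_add_one,
    apply_sup_eq_sup_comp_of_linearOrder (k * ·) (fun _ _ h => Nat.mul_le_mul_left k h)
      (mul_zero k)]
  rfl

lemma exists_bag_superset_of_isClique (P : PathDecomp G) {s : Finset V} (hs : s.Nonempty)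
    (hc : G.IsClique (s : Set V)) : ∃ i, s ⊆ P.bag i := by
  have : ∀ v, ∃ i, v ∈ P.bag i ∧ ∀ j, v ∈ P.bag j → i ≤ j := fun v => by
    obtain ⟨i, hi⟩ := P.mem_bag v
    exact ⟨_, wellFounded_lt.min_mem {i | v ∈ P.bag i} ⟨i, hi⟩,
      fun j hj => wellFounded_lt.min_le (s := {i | v ∈ P.bag i}) hj⟩
  choose first mem_first first_le using this
  -- The vertex of `s` that appears last is met, in its first bag, by every other vertex of `s`.
  obtain ⟨w, hw, hmax⟩ := s.exists_max_image first hs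
  refine ⟨first w, fun v hv => ?_⟩
  obtain rfl | hvw := eq_or_ne v w
  · exact mem_first v
  obtain ⟨j, hvj, hwj⟩ := P.adj_bag v w (hc hv hw hvw)
  exact P.convex v _ _ j (hmax v hv) (first_le w j hwj) (mem_first v) hvj

def single [Fintype V] (G : SimpleGraph V) : PathDecomp G where
  n := 1
  bag _ := univ
  mem_bag v := ⟨0, mem_univ v⟩
  adj_bag u v _ := ⟨0, mem_univ u, mem_univ v⟩
  convex _ _ _ _ _ _ _ _ := mem_univ _

def inflate (P : PathDecomp G) (k : ℕ) : PathDecomp (_root_.inflate G k) where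
  n := P.n
  bag i := P.bag i ×ˢ univ
  mem_bag x := by
    obtain ⟨i, hi⟩ := P.mem_bag x.1
    exact ⟨i, mem_product.2 ⟨hi, mem_univ _⟩⟩
  adj_bag x y hxy := by
    obtain ⟨-, h | h⟩ := inflate_adj.1 hxy
    · obtain ⟨i, hi⟩ := P.mem_bag x.1
      exact ⟨i, mem_product.2 ⟨hi, mem_univ _⟩, mem_product.2 ⟨h ▸ hi, mem_univ _⟩⟩
    · obtain ⟨i, hx, hy⟩ := P.adj_bag _ _ h
      exact ⟨i, mem_product.2 ⟨hx, mem_univ _⟩, mem_product.2 ⟨hy, mem_univ _⟩⟩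
  convex x i j l hij hjl hi hl := by
    rw [mem_product] at *
    exact ⟨P.convex x.1 i j l hij hjl hi.1 hl.1, mem_univ _⟩

lemma width_inflate_add_one [Nonempty V] (P : PathDecomp G) {k : ℕ} (hk : 0 < k) :
    (P.inflate k).width + 1 = k * (P.width + 1) := by
  have : Nonempty (V × Fin k) := ⟨(Classical.arbitrary V, ⟨0, hk⟩)⟩
  rw [mul_width_add_one, width_add_one]
  exact congrArg _ (funext fun i => by simp [inflate, mul_comm])

section deflate

variable {k : ℕ} (hk : 0 < k)
include hk

lemma exists_bag_forall_copies (Q : PathDecomp (_root_.inflate G k)) {s : Finset V}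
    (hs : s.Nonempty) (hc : G.IsClique (s : Set V)) :
    ∃ i, ∀ v ∈ s, ∀ a, (v, a) ∈ Q.bag i := by
  obtain ⟨i, hi⟩ :=
    Q.exists_bag_superset_of_isClique (hs.product (univ_nonempty_iff.2 ⟨⟨0, hk⟩⟩))
    (by simpa [coe_product] using hc.inflate k)
  exact ⟨i, fun v hv a => hi (mem_product.2 ⟨hv, mem_univ a⟩)⟩

noncomputable def deflate (Q : PathDecomp (_root_.inflate G k)) : PathDecomp G where
  n := Q.n
  bag i := fullFibers (Q.bag i)
  mem_bag v := by
    obtain ⟨i, hi⟩ := Q.exists_bag_forall_copies hk (singleton_nonempty v) (by simp)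
    exact ⟨i, (mem_fullFibers hk).2 (hi v (mem_singleton_self v))⟩
  adj_bag u v huv := by
    classical
    obtain ⟨i, hi⟩ := Q.exists_bag_forall_copies hk (insert_nonempty u {v})
      (by simpa [coe_insert] using G.isClique_pair.2 fun _ => huv)
    exact ⟨i, (mem_fullFibers hk).2 (hi u (by simp)), (mem_fullFibers hk).2 (hi v (by simp))⟩
  convex v i j l hij hjl hi hl := (mem_fullFibers hk).2 fun a =>
    Q.convex (v, a) i j l hij hjl ((mem_fullFibers hk).1 hi a) ((mem_fullFibers hk).1 hl a)

lemma mul_width_deflate_add_one_le [Nonempty V] (Q : PathDecomp (_root_.inflate G k)) :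
    k * ((Q.deflate hk).width + 1) ≤ Q.width + 1 := by
  have : Nonempty (V × Fin k) := ⟨(Classical.arbitrary V, ⟨0, hk⟩)⟩
  rw [mul_width_add_one, width_add_one]
  exact sup_mono_fun fun i _ => mul_card_fullFibers_le hk (Q.bag i)

end deflate

end PathDecomp

lemma pathwidth_le_width {V : Type*} {G : SimpleGraph V} (P : PathDecomp G) :
    pathwidth G ≤ P.width :=
  Nat.sInf_le ⟨P, rfl⟩

lemma exists_width_eq_pathwidth {V : Type*} [Fintype V] (G : SimpleGraph V) :
    ∃ P : PathDecomp G, P.width = pathwidth G :=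
  Nat.sInf_mem (s := {w | ∃ P : PathDecomp G, P.width = w}) ⟨_, PathDecomp.single G, rfl⟩

/-- For any graph `G` and positive `k`, `pw(G ⋄ k) + 1 = k · (pw(G) + 1)`. -/
theorem pathwidth_inflate {V : Type*} [Fintype V] [Nonempty V]
    (G : SimpleGraph V) (k : ℕ) (hk : 0 < k) :
    pathwidth (inflate G k) + 1 = k * (pathwidth G + 1) := by
  obtain ⟨P, hP⟩ := exists_width_eq_pathwidth G
  obtain ⟨Q, hQ⟩ := exists_width_eq_pathwidth (inflate G k)
  apply le_antisymm
  · calc pathwidth (inflate G k) + 1 ≤ (P.inflate k).width + 1 :=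
          Nat.add_le_add_right (pathwidth_le_width _) 1
      _ = k * (pathwidth G + 1) := by rw [P.width_inflate_add_one hk, hP]
  · calc k * (pathwidth G + 1) ≤ k * ((Q.deflate hk).width + 1) :=
          Nat.mul_le_mul_left k (Nat.add_le_add_right (pathwidth_le_width _) 1)
      _ ≤ pathwidth (inflate G k) + 1 := hQ ▸ Q.mul_width_deflate_add_one_le hk
end

section
/- For every graph G, the pathwidth of G equals the minimum over all interval supergraphs H of G (on the same vertex set) of ω(H) − 1, where ω(H) is the clique number of H. -/
open SimpleGraph

/-- An interval graph: vertices can be assigned closed real intervals so that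
distinct vertices are adjacent iff their intervals intersect. -/
def IsIntervalGraph {V : Type*} (G : SimpleGraph V) : Prop :=
  ∃ a b : V → ℝ, (∀ v, a v ≤ b v) ∧
    ∀ u v : V, u ≠ v →
      (G.Adj u v ↔ (Set.Icc (a u) (b u) ∩ Set.Icc (a v) (b v)).Nonempty)

/-!
A path decomposition `B₀, …, Bₙ₋₁` of `G` turns into an interval supergraph by giving each
vertex the interval of indices of the bags that contain it; a clique of this graph has a common
point `i` (one-dimensional Helly property), so it lies in the bag `Bᵢ`. Conversely, for an
interval supergraph `H`, the sets of vertices whose intervals contain a given left endpoint, taken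
in increasing order of that endpoint, are cliques of `H` and form a path decomposition of `G`.
-/

open Finset

section

variable {V α : Type*}

lemma Set.nonempty_Icc_inter_Icc [LinearOrder α] {a b c d : α} :
    (Set.Icc a b ∩ Set.Icc c d).Nonempty ↔ a ≤ b ∧ a ≤ d ∧ c ≤ b ∧ c ≤ d := by
  rw [Set.Icc_inter_Icc, Set.nonempty_Icc, sup_le_iff, le_inf_iff, le_inf_iff, and_assoc]

section IntervalGraph

variable [LinearOrder α] (a b : V → α)

@[simps]
def intervalGraph : SimpleGraph V where
  Adj u v := u ≠ v ∧ (Set.Icc (a u) (b u) ∩ Set.Icc (a v) (b v)).Nonempty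
  symm := ⟨fun _ _ h => ⟨h.1.symm, Set.inter_comm _ _ ▸ h.2⟩⟩
  loopless := ⟨fun _ h => h.1 rfl⟩

lemma intervalGraph_comp_orderEmbedding {β : Type*} [LinearOrder β] (f : α ↪o β) :
    intervalGraph (f ∘ a) (f ∘ b) = intervalGraph a b := by
  ext u v
  simp only [intervalGraph_adj, Set.nonempty_Icc_inter_Icc, Function.comp_apply,
    f.le_iff_le]

lemma isIntervalGraph_iff {H : SimpleGraph V} :
    IsIntervalGraph H ↔ ∃ a b : V → ℝ, (∀ v, a v ≤ b v) ∧ H = intervalGraph a b := by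
  refine exists₂_congr fun a b => and_congr_right fun _ => ?_
  simp only [SimpleGraph.ext_iff, funext_iff, intervalGraph_adj, eq_iff_iff]
  exact forall₂_congr fun u v => ⟨fun h => ⟨fun huv => ⟨huv.ne, (h huv.ne).1 huv⟩,
    fun ⟨hne, hI⟩ => (h hne).2 hI⟩, fun h hne => by rw [h, and_iff_right hne]⟩

lemma isIntervalGraph_intervalGraph (f : α ↪o ℝ) (hab : ∀ v, a v ≤ b v) :
    IsIntervalGraph (intervalGraph a b) :=
  isIntervalGraph_iff.2 ⟨f ∘ a, f ∘ b, fun v => f.le_iff_le.2 (hab v),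
    (intervalGraph_comp_orderEmbedding a b f).symm⟩

variable {a b}

lemma sup'_mem_Icc_of_isClique (hab : ∀ v, a v ≤ b v) {s : Finset V}
    (hs : (intervalGraph a b).IsClique s) (hne : s.Nonempty) {v : V} (hv : v ∈ s) :
    s.sup' hne a ∈ Set.Icc (a v) (b v) := by
  refine ⟨le_sup' a hv, sup'_le hne a fun w hw => ?_⟩
  obtain rfl | hwv := eq_or_ne w v
  · exact hab w
  · exact (Set.nonempty_Icc_inter_Icc.1 (hs hw hv hwv).2).2.1

lemma isClique_of_mem_Icc {s : Set V} {x : α} (hx : ∀ v ∈ s, x ∈ Set.Icc (a v) (b v)) :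
    (intervalGraph a b).IsClique s :=
  fun u hu v hv huv => ⟨huv, x, hx u hu, hx v hv⟩

end IntervalGraph

lemma isIntervalGraph_top : IsIntervalGraph (⊤ : SimpleGraph V) :=
  ⟨fun _ => 0, fun _ => 0, fun _ => le_rfl, fun u v huv => by simp [huv]⟩

namespace PathDecomp

variable {G H : SimpleGraph V}

def ofLE (P : PathDecomp H) (h : G ≤ H) : PathDecomp G :=
  { P with adj_bag := fun u v huv => P.adj_bag u v (h huv) }

lemma pathwidth_le_width (P : PathDecomp G) : pathwidth G ≤ P.width :=
  Nat.sInf_le ⟨P, rfl⟩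

end PathDecomp

section Stabbing

variable [Fintype V] [LinearOrder α] (a b : V → α)

noncomputable def sortedLeftEndpoints : Fin #(univ.image a) ↪o α :=
  (univ.image a).orderEmbOfFin rfl

lemma exists_sortedLeftEndpoints_eq (v : V) : ∃ i, sortedLeftEndpoints a i = a v :=
  Set.mem_range.1 (by simp [sortedLeftEndpoints, range_orderEmbOfFin])

open Classical in
noncomputable def stabbingDecomp (hab : ∀ v, a v ≤ b v) : PathDecomp (intervalGraph a b) where
  n := #(univ.image a)
  bag i := {u | sortedLeftEndpoints a i ∈ Set.Icc (a u) (b u)}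
  mem_bag v := by
    obtain ⟨i, hi⟩ := exists_sortedLeftEndpoints_eq a v
    exact ⟨i, by simp [hi, hab v]⟩
  adj_bag u v huv := by
    obtain ⟨hau, hauv, havu, hav⟩ := Set.nonempty_Icc_inter_Icc.1 huv.2
    obtain ⟨w, hw⟩ : ∃ w, a w = max (a u) (a v) :=
      (max_choice (a u) (a v)).elim (fun h => ⟨u, h.symm⟩) fun h => ⟨v, h.symm⟩
    obtain ⟨i, hi⟩ := exists_sortedLeftEndpoints_eq a w
    exact ⟨i, by simp [hi, hw, hau, havu], by simp [hi, hw, hauv, hav]⟩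
  convex v i j l hij hjl hi hl := by
    simp only [mem_filter, mem_univ, true_and, Set.mem_Icc] at hi hl ⊢
    exact ⟨hi.1.trans ((sortedLeftEndpoints a).monotone hij),
      ((sortedLeftEndpoints a).monotone hjl).trans hl.2⟩

lemma width_stabbingDecomp_le (hab : ∀ v, a v ≤ b v) :
    (stabbingDecomp a b hab).width ≤ (intervalGraph a b).cliqueNum - 1 := by
  refine Nat.sub_le_sub_right (Finset.sup_le fun i _ => ?_) 1
  refine (isClique_of_mem_Icc (x := sortedLeftEndpoints a i) fun u hu => ?_).card_le_cliqueNum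
  classical
  simpa [stabbingDecomp] using hu

end Stabbing

lemma exists_pathDecomp_width_le [Fintype V] {G H : SimpleGraph V} (hGH : G ≤ H)
    (hH : IsIntervalGraph H) : ∃ P : PathDecomp G, P.width ≤ H.cliqueNum - 1 := by
  obtain ⟨a, b, hab, rfl⟩ := isIntervalGraph_iff.1 hH
  exact ⟨(stabbingDecomp a b hab).ofLE hGH, width_stabbingDecomp_le a b hab⟩

namespace PathDecomp

variable {G : SimpleGraph V} (P : PathDecomp G) [DecidableEq V]

def bagsContaining (v : V) : Finset (Fin P.n) := {i | v ∈ P.bag i}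

@[simp]
lemma mem_bagsContaining {v : V} {i : Fin P.n} : i ∈ P.bagsContaining v ↔ v ∈ P.bag i := by
  simp [bagsContaining]

lemma nonempty_bagsContaining (v : V) : (P.bagsContaining v).Nonempty := by
  obtain ⟨i, hi⟩ := P.mem_bag v
  exact ⟨i, P.mem_bagsContaining.2 hi⟩

def first (v : V) : Fin P.n := (P.bagsContaining v).min' (P.nonempty_bagsContaining v)

def last (v : V) : Fin P.n := (P.bagsContaining v).max' (P.nonempty_bagsContaining v)

lemma mem_bag_iff {v : V} {i : Fin P.n} :
    v ∈ P.bag i ↔ i ∈ Set.Icc (P.first v) (P.last v) := by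
  refine ⟨fun h => ?_, fun h => P.convex v _ i _ h.1 h.2 ?_ ?_⟩
  · rw [← mem_bagsContaining] at h
    exact ⟨min'_le _ _ h, le_max' _ _ h⟩
  · exact P.mem_bagsContaining.1 (min'_mem _ _)
  · exact P.mem_bagsContaining.1 (max'_mem _ _)

lemma first_le_last (v : V) : P.first v ≤ P.last v :=
  min'_le_max' _ (P.nonempty_bagsContaining v)

lemma le_intervalGraph : G ≤ intervalGraph P.first P.last := fun u v huv => by
  obtain ⟨i, hu, hv⟩ := P.adj_bag u v huv
  exact ⟨huv.ne, i, P.mem_bag_iff.1 hu, P.mem_bag_iff.1 hv⟩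

lemma isIntervalGraph_intervalGraph_first_last : IsIntervalGraph (intervalGraph P.first P.last) :=
  isIntervalGraph_intervalGraph _ _ ((Fin.valOrderEmb P.n).trans Nat.castOrderEmbedding)
    P.first_le_last

lemma card_le_of_isClique {s : Finset V} (hs : (intervalGraph P.first P.last).IsClique s) :
    #s ≤ univ.sup fun i => #(P.bag i) := by
  obtain rfl | hne := s.eq_empty_or_nonempty
  · simp
  have hsub : s ⊆ P.bag (s.sup' hne P.first) := fun v hv =>
    P.mem_bag_iff.2 (sup'_mem_Icc_of_isClique P.first_le_last hs hne hv)
  exact (card_le_card hsub).trans (le_sup (f := fun i => #(P.bag i)) (mem_univ _))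

lemma cliqueNum_intervalGraph_sub_one_le :
    (intervalGraph P.first P.last).cliqueNum - 1 ≤ P.width := by
  obtain ⟨s, hs⟩ := (intervalGraph P.first P.last).exists_isNClique_cliqueNum
  exact Nat.sub_le_sub_right (hs.card_eq ▸ P.card_le_of_isClique hs.isClique) 1

end PathDecomp

lemma PathDecomp.exists_isIntervalGraph_cliqueNum_sub_one_le {G : SimpleGraph V}
    (P : PathDecomp G) :
    ∃ H : SimpleGraph V, G ≤ H ∧ IsIntervalGraph H ∧ H.cliqueNum - 1 ≤ P.width := by
  classical
  exact ⟨_, P.le_intervalGraph, P.isIntervalGraph_intervalGraph_first_last,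
    P.cliqueNum_intervalGraph_sub_one_le⟩

end

/-- The pathwidth of `G` equals the minimum of `ω(H) − 1` over all interval
supergraphs `H` of `G` on the same vertex set. -/
theorem pathwidth_eq_min_interval_supergraph {V : Type*} [Fintype V] (G : SimpleGraph V) :
    pathwidth G =
      sInf {w | ∃ H : SimpleGraph V, G ≤ H ∧ IsIntervalGraph H ∧ H.cliqueNum - 1 = w} := by
  apply le_antisymm
  · refine le_csInf ?_ ?_
    · exact ⟨_, ⊤, le_top, isIntervalGraph_top, rfl⟩
    rintro _ ⟨H, hGH, hH, rfl⟩
    obtain ⟨P, hP⟩ := exists_pathDecomp_width_le hGH hH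
    exact P.pathwidth_le_width.trans hP
  · obtain ⟨P₀, -⟩ := exists_pathDecomp_width_le (le_top : G ≤ ⊤) isIntervalGraph_top
    have hdecomp : {w | ∃ P : PathDecomp G, P.width = w}.Nonempty := ⟨_, P₀, rfl⟩
    obtain ⟨P, hP⟩ := Nat.sInf_mem hdecomp
    obtain ⟨H, hGH, hH, hHP⟩ := P.exists_isIntervalGraph_cliqueNum_sub_one_le
    exact le_trans (Nat.sInf_le ⟨H, hGH, hH, rfl⟩) (hHP.trans_eq hP)
end

section
/- For every k ≥ 0, the graph 𝕋̃^k is a minor-minimal obstruction to pathwidth k: pw(𝕋̃^k) = k + 1, and every proper minor of 𝕋̃^k has pathwidth at most k. -/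
open SimpleGraph

/-- Vertices of the graph `𝕋̃^k`: the complete ternary tree of height `k`
(addresses: lists over `Fin 3` of length ≤ `k`), together with one pendant
vertex per leaf (encoded as the leaf's address extended by `0`). -/
def TildeTVert (k : ℕ) : Type :=
  {l : List (Fin 3) // l.length ≤ k ∨ (l.length = k + 1 ∧ l.getLast? = some 0)}

/-- The graph `𝕋̃^k`: the complete ternary tree of height `k` with an extra
pendant leaf attached to each of its `3^k` original leaves. Two vertices are
adjacent iff one's address extends the other's by one element. -/
def tildeT (k : ℕ) : SimpleGraph (TildeTVert k) :=
  SimpleGraph.fromRel fun x y => ∃ a : Fin 3, (y.1 : List (Fin 3)) = x.1 ++ [a]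

/-- A minor model of `H` in `G`: pairwise disjoint nonempty connected branch
sets, one per vertex of `H`, with an edge of `G` between the branch sets of any
two adjacent vertices of `H`. -/
structure MinorModel {V W : Type*} (G : SimpleGraph V) (H : SimpleGraph W) where
  branch : W → Set V
  branch_nonempty : ∀ w, (branch w).Nonempty
  branch_disjoint : ∀ w w', w ≠ w' → Disjoint (branch w) (branch w')
  branch_connected : ∀ w, (G.induce (branch w)).Connected
  branch_adj : ∀ w w', H.Adj w w' → ∃ x ∈ branch w, ∃ y ∈ branch w', G.Adj x y

/-- `H` is a minor of `G`. -/
def IsMinor {V W : Type*} (H : SimpleGraph W) (G : SimpleGraph V) : Prop :=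
  Nonempty (MinorModel G H)

/-- `H` is a proper minor of `G`: a minor that is not isomorphic to `G`. -/
def IsProperMinor {V W : Type*} (H : SimpleGraph W) (G : SimpleGraph V) : Prop :=
  IsMinor H G ∧ IsEmpty (H ≃g G)

/-- `G` is a minor-minimal obstruction to pathwidth `k`: it has pathwidth
`k + 1` and every proper minor has pathwidth at most `k`. -/
def IsPWObstruction {V : Type*} (G : SimpleGraph V) (k : ℕ) : Prop :=
  pathwidth G = k + 1 ∧
    ∀ (W : Type) (H : SimpleGraph W), IsProperMinor H G → pathwidth H ≤ k


/-!
The lower bound goes by induction on `k`. Restricted to each of the three subtrees below the root,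
a path decomposition of `𝕋̃^(k+1)` has a bag holding `k + 2` vertices of that subtree. Of these
three bags take the middle one along the path: the vertices outside its subtree form a connected
set meeting the two outer bags, hence also the middle one, which therefore has `k + 3` vertices.

The upper bounds come from interval layouts, which give each vertex an interval of bag indices so
that adjacent vertices get overlapping intervals. Placing the three subtrees side by side under a
root spanning all of them gives width `k + 1`. Given an edge `e`, place the subtree containing `e`
in the middle, with the root spanning only the middle block and one slot on either side, and
recurse. At the level of `e`, either put the subtree below `e` after the other two, away from the
root: this lays out `𝕋̃^k - e` with width `k`; or lay it out in full: this gives width `k + 1`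
with every bag of size `k + 2` containing both ends of `e`, hence width `k` once `e` is contracted.

A proper minor either has a branch set containing an edge `e`, and is then a minor of `𝕋̃^k / e`;
or has singleton branch sets and does not use some edge `e`, and is then a minor of `𝕋̃^k - e`;
otherwise it is `𝕋̃^k` itself.
-/

namespace PathDecomp

variable {V : Type*} {G : SimpleGraph V}

lemma pathwidth_le (P : PathDecomp G) {c : ℕ} (h : ∀ i, (P.bag i).card ≤ c + 1) :
    pathwidth G ≤ c := by
  have := Finset.sup_le fun i (_ : i ∈ Finset.univ) => h i
  have : pathwidth G ≤ P.width := Nat.sInf_le ⟨P, rfl⟩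
  unfold width at this
  omega

lemma card_bag_le (P : PathDecomp G) (i : Fin P.n) : (P.bag i).card ≤ P.width + 1 := by
  have := Finset.le_sup (f := fun i => (P.bag i).card) (Finset.mem_univ i)
  unfold width
  omega

def univ [Fintype V] (G : SimpleGraph V) : PathDecomp G where
  n := 1
  bag _ := Finset.univ
  mem_bag _ := ⟨(0 : Fin 1), Finset.mem_univ _⟩
  adj_bag _ _ _ := ⟨(0 : Fin 1), Finset.mem_univ _, Finset.mem_univ _⟩
  convex _ _ _ _ _ _ _ _ := Finset.mem_univ _

lemma exists_width_eq_pathwidth [Fintype V] (G : SimpleGraph V) :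
    ∃ P : PathDecomp G, P.width = pathwidth G :=
  Nat.sInf_mem (s := {w | ∃ P : PathDecomp G, P.width = w}) ⟨_, univ G, rfl⟩

def ofIntervals [Fintype V] (lo hi : V → ℕ) (hle : ∀ v, lo v ≤ hi v)
    (hadj : ∀ u v, G.Adj u v → lo u ≤ hi v ∧ lo v ≤ hi u) : PathDecomp G where
  n := Finset.univ.sup hi + 1
  bag i := Finset.univ.filter fun v => lo v ≤ i ∧ (i : ℕ) ≤ hi v
  mem_bag v := by
    have := Finset.le_sup (f := hi) (Finset.mem_univ v)
    exact ⟨⟨lo v, by have := hle v; omega⟩, by simp [hle v]⟩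
  adj_bag u v huv := by
    have hu := Finset.le_sup (f := hi) (Finset.mem_univ u)
    have hv := Finset.le_sup (f := hi) (Finset.mem_univ v)
    have := hadj u v huv
    have := hle u
    have := hle v
    refine ⟨⟨max (lo u) (lo v), by omega⟩, ?_, ?_⟩ <;> simp <;> omega
  convex v i j l hij hjl hi hl := by
    simp only [Finset.mem_filter, Finset.mem_univ, true_and] at hi hl ⊢
    exact ⟨hi.1.trans hij, (Fin.le_def.1 hjl).trans hl.2⟩

noncomputable def comap {W : Type*} {H : SimpleGraph W} (f : H ↪g G) (P : PathDecomp G) :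
    PathDecomp H where
  n := P.n
  bag i := (P.bag i).preimage f f.injective.injOn
  mem_bag w := by simpa using P.mem_bag (f w)
  adj_bag u v h := by simpa using P.adj_bag (f u) (f v) (f.map_rel_iff.2 h)
  convex w i j l hij hjl hi hl := by
    simp only [Finset.mem_preimage] at hi hl ⊢
    exact P.convex _ i j l hij hjl hi hl

lemma card_comap_bag_lt {W : Type*} {H : SimpleGraph W} (f : H ↪g G) (P : PathDecomp G)
    (i : Fin P.n) {y : V} (hy : y ∈ P.bag i) (hyf : ∀ w, f w ≠ y) :
    ((P.comap f).bag i).card < (P.bag i).card := by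
  classical
  have hsub : insert y (((P.comap f).bag i).map f.toEmbedding) ⊆ P.bag i := by
    refine Finset.insert_subset hy fun v hv => ?_
    obtain ⟨w, hw, rfl⟩ := Finset.mem_map.1 hv
    simpa [comap] using hw
  have hnot : y ∉ ((P.comap f).bag i).map f.toEmbedding := by
    simp only [Finset.mem_map]
    rintro ⟨w, -, hw⟩
    exact hyf w hw
  simpa [Finset.card_insert_of_notMem hnot] using Finset.card_le_card hsub

lemma exists_mem_bag_of_preconnected (P : PathDecomp G) {S : Set V}
    (hS : (G.induce S).Preconnected) {i j l : Fin P.n} (hij : i ≤ j) (hjl : j ≤ l) {x z : V}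
    (hx : x ∈ S) (hz : z ∈ S) (hxi : x ∈ P.bag i) (hzl : z ∈ P.bag l) :
    ∃ y ∈ S, y ∈ P.bag j := by
  obtain ⟨p⟩ := hS ⟨x, hx⟩ ⟨z, hz⟩
  suffices ∀ (a b : S) (p : (G.induce S).Walk a b) (i : Fin P.n), i ≤ j → (a : V) ∈ P.bag i →
      (b : V) ∈ P.bag l → ∃ y ∈ S, y ∈ P.bag j from this _ _ p i hij hxi hzl
  intro a b p
  induction p with
  | nil => exact fun i hij ha hb => ⟨_, Subtype.prop _, P.convex _ i j l hij hjl ha hb⟩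
  | @cons a c b hac p ih =>
    intro i hij ha hb
    obtain ⟨s, has, hcs⟩ := P.adj_bag a c (SimpleGraph.comap_adj.1 hac)
    by_cases hjs : j ≤ s
    · exact ⟨a, a.2, P.convex _ i j s hij hjs ha has⟩
    · exact ih s (le_of_lt (not_le.1 hjs)) hcs hb

end PathDecomp

namespace MinorModel

variable {V W : Type*} {G : SimpleGraph V} {H : SimpleGraph W} (M : MinorModel G H)

lemma eq_of_mem_branch {x : V} {w w' : W} (hw : x ∈ M.branch w) (hw' : x ∈ M.branch w') :
    w = w' := by
  by_contra hne
  exact Set.disjoint_left.1 (M.branch_disjoint w w' hne) hw hw'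

lemma finite [Finite V] (M : MinorModel G H) : Finite W :=
  Finite.of_injective (fun w => (M.branch_nonempty w).some) fun w w' h =>
    M.eq_of_mem_branch (M.branch_nonempty w).some_mem
      ((congrArg (· ∈ M.branch w') h).mpr (M.branch_nonempty w').some_mem)

open Classical in
noncomputable def pullback [Fintype W] (P : PathDecomp G) : PathDecomp H where
  n := P.n
  bag i := Finset.univ.filter fun w => ∃ x ∈ M.branch w, x ∈ P.bag i
  mem_bag w := by
    obtain ⟨x, hx⟩ := M.branch_nonempty w
    obtain ⟨i, hi⟩ := P.mem_bag x
    exact ⟨i, by simpa using ⟨x, hx, hi⟩⟩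
  adj_bag w w' h := by
    obtain ⟨x, hx, y, hy, hxy⟩ := M.branch_adj w w' h
    obtain ⟨i, hxi, hyi⟩ := P.adj_bag x y hxy
    exact ⟨i, by simpa using ⟨x, hx, hxi⟩, by simpa using ⟨y, hy, hyi⟩⟩
  convex w i j l hij hjl hi hl := by
    simp only [Finset.mem_filter, Finset.mem_univ, true_and] at hi hl ⊢
    obtain ⟨x, hx, hxi⟩ := hi
    obtain ⟨z, hz, hzl⟩ := hl
    exact P.exists_mem_bag_of_preconnected (M.branch_connected w).preconnected hij hjl hx hz
      hxi hzl

section pullback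

variable [Fintype W] (P : PathDecomp G) (i : Fin P.n)

open Classical in
lemma sum_card_filter_mem_branch_le :
    ∑ w ∈ (M.pullback P).bag i, ((P.bag i).filter (· ∈ M.branch w)).card ≤ (P.bag i).card := by
  rw [← Finset.card_biUnion]
  · exact Finset.card_le_card (Finset.biUnion_subset.2 fun w _ => Finset.filter_subset _ _)
  · intro w _ w' _ hne
    exact Finset.disjoint_filter.2 fun x _ hx hx' =>
      Set.disjoint_left.1 (M.branch_disjoint w w' hne) hx hx'

open Classical in
lemma one_le_card_filter_mem_branch {w : W} (hw : w ∈ (M.pullback P).bag i) :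
    1 ≤ ((P.bag i).filter (· ∈ M.branch w)).card := by
  obtain ⟨x, hx, hxi⟩ := (Finset.mem_filter.1 hw).2
  exact Finset.card_pos.2 ⟨x, Finset.mem_filter.2 ⟨hxi, hx⟩⟩

lemma card_pullback_bag_le : ((M.pullback P).bag i).card ≤ (P.bag i).card := by
  classical
  calc ((M.pullback P).bag i).card
      ≤ ∑ w ∈ (M.pullback P).bag i, ((P.bag i).filter (· ∈ M.branch w)).card := by
        simpa using Finset.card_nsmul_le_sum _ _ 1 fun w hw =>
          M.one_le_card_filter_mem_branch P i hw
    _ ≤ (P.bag i).card := M.sum_card_filter_mem_branch_le P i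

lemma card_pullback_bag_lt {w : W} {x y : V} (hx : x ∈ M.branch w) (hy : y ∈ M.branch w)
    (hxy : x ≠ y) (hxi : x ∈ P.bag i) (hyi : y ∈ P.bag i) :
    ((M.pullback P).bag i).card < (P.bag i).card := by
  classical
  set T := (M.pullback P).bag i
  have hw : w ∈ T := Finset.mem_filter.2 ⟨Finset.mem_univ w, x, hx, hxi⟩
  have htwo : 2 ≤ ((P.bag i).filter (· ∈ M.branch w)).card :=
    Finset.one_lt_card.2 ⟨x, by simp [hxi, hx], y, by simp [hyi, hy], hxy⟩
  have hrest : (T.erase w).card ≤ ∑ w' ∈ T.erase w, ((P.bag i).filter (· ∈ M.branch w')).card := by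
    simpa using Finset.card_nsmul_le_sum _ _ 1 fun w' hw' =>
      M.one_le_card_filter_mem_branch P i (Finset.mem_of_mem_erase hw')
  have hsum := M.sum_card_filter_mem_branch_le P i
  rw [← Finset.add_sum_erase _ _ hw] at hsum
  have := Finset.card_erase_add_one hw
  omega

end pullback

theorem pathwidth_le [Fintype V] (M : MinorModel G H) : pathwidth H ≤ pathwidth G := by
  have := M.finite
  let _ := Fintype.ofFinite W
  obtain ⟨P, hP⟩ := PathDecomp.exists_width_eq_pathwidth G
  exact hP ▸ (M.pullback P).pathwidth_le fun i =>
    (M.card_pullback_bag_le P i).trans (P.card_bag_le i)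

theorem pathwidth_le_of_saturated [Finite V] (P : PathDecomp G) {w : W} {x y : V}
    (hx : x ∈ M.branch w) (hy : y ∈ M.branch w) (hxy : x ≠ y) {c : ℕ}
    (hP : ∀ i, (P.bag i).card ≤ c + 1 ∨ (x ∈ P.bag i ∧ y ∈ P.bag i ∧ (P.bag i).card ≤ c + 2)) :
    pathwidth H ≤ c := by
  have := M.finite
  let _ := Fintype.ofFinite W
  refine (M.pullback P).pathwidth_le fun i => ?_
  rcases hP i with h | ⟨hxi, hyi, h⟩
  · exact (M.card_pullback_bag_le P i).trans h
  · have := M.card_pullback_bag_lt P i hx hy hxy hxi hyi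
    omega

def deleteEdge {x y : V} (hsep : ∀ w, x ∈ M.branch w → y ∉ M.branch w)
    (hunused : ∀ w w', H.Adj w w' → x ∈ M.branch w → y ∉ M.branch w') :
    MinorModel (G.deleteEdges {s(x, y)}) H where
  branch := M.branch
  branch_nonempty := M.branch_nonempty
  branch_disjoint := M.branch_disjoint
  branch_connected w := by
    convert M.branch_connected w using 1
    ext a b
    simp only [SimpleGraph.comap_adj, Function.Embedding.coe_subtype,
      SimpleGraph.deleteEdges_adj, Set.mem_singleton_iff, and_iff_left_iff_imp]
    intro _ hab
    rcases Sym2.eq_iff.1 hab with ⟨ha, hb⟩ | ⟨ha, hb⟩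
    · exact hsep w (ha ▸ a.2) (hb ▸ b.2)
    · exact hsep w (hb ▸ b.2) (ha ▸ a.2)
  branch_adj w w' h := by
    obtain ⟨a, ha, b, hb, hab⟩ := M.branch_adj w w' h
    refine ⟨a, ha, b, hb, SimpleGraph.deleteEdges_adj.2 ⟨hab, fun he => ?_⟩⟩
    rcases Sym2.eq_iff.1 (Set.mem_singleton_iff.1 he) with ⟨rfl, rfl⟩ | ⟨rfl, rfl⟩
    · exact hunused w w' h ha hb
    · exact hunused w' w h.symm hb ha

lemma eq_of_mem_branch_of_forall_not_adj {w : W}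
    (hthin : ∀ x ∈ M.branch w, ∀ y ∈ M.branch w, ¬ G.Adj x y) {x y : V}
    (hx : x ∈ M.branch w) (hy : y ∈ M.branch w) : x = y := by
  by_contra hxy
  obtain ⟨p⟩ := (M.branch_connected w).preconnected ⟨x, hx⟩ ⟨y, hy⟩
  cases p with
  | nil => exact hxy rfl
  | cons h _ => exact hthin x hx _ (Subtype.prop _) (SimpleGraph.comap_adj.1 h)

lemma nonempty_iso (hthin : ∀ w, ∀ x ∈ M.branch w, ∀ y ∈ M.branch w, ¬ G.Adj x y)
    (hused : ∀ x y, G.Adj x y → ∃ w w', H.Adj w w' ∧ x ∈ M.branch w ∧ y ∈ M.branch w')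
    (hdeg : ∀ v, ∃ u, G.Adj v u) : Nonempty (H ≃g G) := by
  let f : W → V := fun w => (M.branch_nonempty w).some
  have hf : ∀ w, f w ∈ M.branch w := fun w => (M.branch_nonempty w).some_mem
  have hbranch : ∀ {w x}, x ∈ M.branch w → x = f w := fun hx =>
    M.eq_of_mem_branch_of_forall_not_adj (hthin _) hx (hf _)
  have hinj : Function.Injective f := fun w w' h => M.eq_of_mem_branch (hf w) (h ▸ hf w')
  have hsurj : Function.Surjective f := fun v => by
    obtain ⟨u, hvu⟩ := hdeg v
    obtain ⟨w, -, -, hv, -⟩ := hused v u hvu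
    exact ⟨w, (hbranch hv).symm⟩
  refine ⟨⟨Equiv.ofBijective f ⟨hinj, hsurj⟩, fun {w w'} => ⟨fun h => ?_, fun h => ?_⟩⟩⟩
  · obtain ⟨w₁, w₁', h₁, hw, hw'⟩ := hused _ _ h
    rwa [M.eq_of_mem_branch (hf w) hw, M.eq_of_mem_branch (hf w') hw']
  · obtain ⟨x, hx, y, hy, hxy⟩ := M.branch_adj w w' h
    rwa [hbranch hx, hbranch hy] at hxy

end MinorModel

namespace TildeT

variable {k : ℕ}

def verts : ℕ → Finset (List (Fin 3))
  | 0 => {[], [0]}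
  | k + 1 =>
    insert [] (Finset.univ.biUnion fun a => (verts k).map ⟨List.cons a, List.cons_injective⟩)

@[simp] lemma nil_mem_verts : ∀ k, [] ∈ verts k
  | 0 => by simp [verts]
  | k + 1 => by simp [verts]

@[simp] lemma cons_mem_verts_succ {a : Fin 3} {t : List (Fin 3)} :
    a :: t ∈ verts (k + 1) ↔ t ∈ verts k := by
  simp [verts]

lemma mem_verts_iff : ∀ {k : ℕ} {l : List (Fin 3)},
    l ∈ verts k ↔ l.length ≤ k ∨ (l.length = k + 1 ∧ l.getLast? = some 0)
  | 0, [] => by simp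
  | 0, a :: t => by cases t <;> simp [verts, eq_comm]
  | k + 1, [] => by simp
  | k + 1, a :: t => by
    rw [cons_mem_verts_succ, mem_verts_iff]
    cases t <;> simp

lemma eq_nil_of_append_mem_verts_zero {l : List (Fin 3)} {a : Fin 3} (h : l ++ [a] ∈ verts 0) :
    l = [] ∧ a = 0 := by
  simpa [verts, List.append_eq_singleton_iff] using h

instance : Fintype (TildeTVert k) :=
  Fintype.subtype (verts k) fun _ => mem_verts_iff

instance : DecidableEq (TildeTVert k) :=
  inferInstanceAs (DecidableEq (Subtype _))

lemma val_mem_verts (v : TildeTVert k) : v.1 ∈ verts k :=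
  mem_verts_iff.2 v.2

lemma adj_iff {u v : TildeTVert k} :
    (tildeT k).Adj u v ↔ (∃ a, v.1 = u.1 ++ [a]) ∨ ∃ a, u.1 = v.1 ++ [a] := by
  rw [tildeT, SimpleGraph.fromRel_adj, and_iff_right_iff_imp]
  rintro (⟨a, h⟩ | ⟨a, h⟩) rfl <;> simpa using congrArg List.length h

def root (k : ℕ) : TildeTVert k :=
  ⟨[], Or.inl (Nat.zero_le k)⟩

lemma eq_root_iff {v : TildeTVert k} : v = root k ↔ v.1 = [] :=
  Subtype.ext_iff

def parent (v : TildeTVert k) : TildeTVert k :=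
  ⟨v.1.dropLast, Or.inl (by have := mem_verts_iff.1 (val_mem_verts v); simp; omega)⟩

lemma adj_parent {v : TildeTVert k} (hv : v.1 ≠ []) : (tildeT k).Adj v (parent v) :=
  adj_iff.2 (Or.inr ⟨v.1.getLast hv, (List.dropLast_append_getLast hv).symm⟩)

lemma exists_adj (v : TildeTVert k) : ∃ u, (tildeT k).Adj v u := by
  by_cases hv : v.1 = []
  · refine ⟨⟨[0], ?_⟩, adj_iff.2 (Or.inl ⟨0, by simp [hv]⟩)⟩
    cases k <;> simp
  · exact ⟨parent v, adj_parent hv⟩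

lemma preconnected_induce {S : Set (TildeTVert k)} (hroot : root k ∈ S)
    (hparent : ∀ v ∈ S, parent v ∈ S) : ((tildeT k).induce S).Preconnected := by
  suffices h : ∀ n (v : TildeTVert k) (hv : v ∈ S), v.1.length = n →
      ((tildeT k).induce S).Reachable ⟨v, hv⟩ ⟨root k, hroot⟩ from
    fun v w => (h _ v v.2 rfl).trans (h _ w w.2 rfl).symm
  intro n
  induction n with
  | zero =>
    intro v hv hlen
    obtain rfl := eq_root_iff.2 (List.length_eq_zero_iff.1 hlen)
    rfl
  | succ n ih =>
    intro v hv hlen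
    have hne : v.1 ≠ [] := List.ne_nil_of_length_eq_add_one hlen
    have hstep : ((tildeT k).induce S).Adj ⟨v, hv⟩ ⟨parent v, hparent v hv⟩ :=
      SimpleGraph.comap_adj.2 (adj_parent hne)
    exact hstep.reachable.trans (ih _ _ (by simp [parent, hlen]))

def push (a : Fin 3) : tildeT k ↪g tildeT (k + 1) where
  toFun v := ⟨a :: v.1, mem_verts_iff.1 (cons_mem_verts_succ.2 (val_mem_verts v))⟩
  inj' u v h := Subtype.ext (List.cons_injective (congrArg Subtype.val h))
  map_rel_iff' {u v} := by
    rw [adj_iff, adj_iff]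
    change (∃ b, a :: v.1 = a :: u.1 ++ [b]) ∨ (∃ b, a :: u.1 = a :: v.1 ++ [b]) ↔ _
    simp

lemma push_val (a : Fin 3) (v : TildeTVert k) : (push a v).1 = a :: v.1 :=
  rfl

lemma exists_add_two_le_card_bag : ∀ {k : ℕ} (P : PathDecomp (tildeT k)), ∃ i, k + 2 ≤ (P.bag i).card
  | 0, P => by
    have hadj : (tildeT 0).Adj (root 0) ⟨[0], Or.inr ⟨rfl, rfl⟩⟩ := adj_iff.2 (Or.inl ⟨0, rfl⟩)
    obtain ⟨i, h₁, h₂⟩ := P.adj_bag _ _ hadj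
    exact ⟨i, Finset.one_lt_card.2 ⟨_, h₁, _, h₂, hadj.ne⟩⟩
  | k + 1, P => by
    have hsub : ∀ a, ∃ i : Fin P.n, k + 2 ≤ ((P.comap (push a)).bag i).card :=
      fun a => exists_add_two_le_card_bag (P.comap (push a))
    choose t ht using hsub
    have hmono := Tuple.monotone_sort t
    set p := Tuple.sort t 0
    set q := Tuple.sort t 1
    set r := Tuple.sort t 2
    have hpq : p ≠ q := (Tuple.sort t).injective.ne (by decide)
    have hrq : r ≠ q := (Tuple.sort t).injective.ne (by decide)
    -- The vertices outside the middle subtree `q` form a connected set meeting the bags `t p`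
    -- and `t r`, hence also `t q`, which already holds `k + 2` vertices of that subtree.
    let S : Set (TildeTVert (k + 1)) := {v | v.1.head? ≠ some q}
    have hS : ((tildeT (k + 1)).induce S).Preconnected := by
      refine preconnected_induce (show (root (k + 1)).1.head? ≠ some q by simp [root])
        fun v (hv : v.1.head? ≠ some q) => ?_
      change v.1.dropLast.head? ≠ some q
      rw [List.head?_dropLast]
      split_ifs
      exacts [hv, by simp]
    have hmeet : ∀ a ≠ q, ∃ x ∈ S, x ∈ P.bag (t a) := by
      intro a ha
      obtain ⟨u, hu⟩ := Finset.card_pos.1 (show 0 < ((P.comap (push a)).bag (t a)).card by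
        have := ht a; omega)
      exact ⟨push a u, by simpa [S, push_val] using ha, by simpa [PathDecomp.comap] using hu⟩
    obtain ⟨x, hx, hxp⟩ := hmeet p hpq
    obtain ⟨z, hz, hzr⟩ := hmeet r hrq
    obtain ⟨y, hy, hyq⟩ := P.exists_mem_bag_of_preconnected hS
      (hmono (show (0 : Fin 3) ≤ 1 by decide)) (hmono (show (1 : Fin 3) ≤ 2 by decide))
      hx hz hxp hzr
    have := P.card_comap_bag_lt (push q) (t q) hyq fun w hw => hy (by simp [← hw, push_val])
    exact ⟨t q, by have := ht q; omega⟩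

theorem le_pathwidth (k : ℕ) : k + 1 ≤ pathwidth (tildeT k) := by
  obtain ⟨P, hP⟩ := PathDecomp.exists_width_eq_pathwidth (tildeT k)
  obtain ⟨i, hi⟩ := exists_add_two_le_card_bag P
  have := P.card_bag_le i
  omega

/-- Closed intervals of natural numbers, encoded as pairs `(lo, hi)`, that meet. -/
def Overlap (I J : ℕ × ℕ) : Prop :=
  I.1 ≤ J.2 ∧ J.1 ≤ I.2

lemma Overlap.symm {I J : ℕ × ℕ} (h : Overlap I J) : Overlap J I :=
  ⟨h.2, h.1⟩

/-- A layout `f` of `𝕋̃^k` puts the address `l` into the bags with index in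
`[(f l).1, (f l).2]`; `bag k f m` is the bag with index `m`. -/
def bag (k : ℕ) (f : List (Fin 3) → ℕ × ℕ) (m : ℕ) : Finset (List (Fin 3)) :=
  (verts k).filter fun l => (f l).1 ≤ m ∧ m ≤ (f l).2

def Fits (k L : ℕ) (f : List (Fin 3) → ℕ × ℕ) : Prop :=
  ∀ l ∈ verts k, (f l).1 ≤ (f l).2 ∧ (f l).2 < L

lemma mem_bag {f : List (Fin 3) → ℕ × ℕ} {m : ℕ} {l : List (Fin 3)} :
    l ∈ bag k f m ↔ l ∈ verts k ∧ (f l).1 ≤ m ∧ m ≤ (f l).2 :=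
  Finset.mem_filter

lemma card_bag_zero (f : List (Fin 3) → ℕ × ℕ) (m : ℕ) :
    (bag 0 f m).card ≤ 1 ∨ ([] ∈ bag 0 f m ∧ [0] ∈ bag 0 f m ∧ (bag 0 f m).card ≤ 2) := by
  have hsub : bag 0 f m ⊆ {[], [0]} := Finset.filter_subset _ _
  by_cases h : [] ∈ bag 0 f m ∧ [0] ∈ bag 0 f m
  · exact Or.inr ⟨h.1, h.2, (Finset.card_le_card hsub).trans (Finset.card_le_two)⟩
  · refine Or.inl (Finset.card_le_one.2 fun a ha b hb => ?_)
    have ha' := hsub ha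
    have hb' := hsub hb
    simp only [Finset.mem_insert, Finset.mem_singleton] at ha' hb'
    rcases ha' with rfl | rfl <;> rcases hb' with rfl | rfl <;> tauto

/-- Lays out `𝕋̃^(k+1)`: the root occupies the interval `r`, and the subtree below the child `a`
is laid out by `f (σ a)` in the block of `L` slots starting at `s + σ a * L`. -/
def node (σ : Equiv.Perm (Fin 3)) (s L : ℕ) (f : Fin 3 → List (Fin 3) → ℕ × ℕ) (r : ℕ × ℕ) :
    List (Fin 3) → ℕ × ℕ
  | [] => r
  | a :: t => ((f (σ a) t).1 + (s + σ a * L), (f (σ a) t).2 + (s + σ a * L))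

section node

variable {σ : Equiv.Perm (Fin 3)} {s L : ℕ} {f : Fin 3 → List (Fin 3) → ℕ × ℕ} {r : ℕ × ℕ}

lemma overlap_node_cons {a b : Fin 3} {t : List (Fin 3)} :
    Overlap (node σ s L f r (a :: t)) (node σ s L f r (a :: t ++ [b])) ↔
      Overlap (f (σ a) t) (f (σ a) (t ++ [b])) := by
  simp [node, Overlap]

lemma mem_bag_node {l : List (Fin 3)} {m : ℕ} :
    l ∈ bag (k + 1) (node σ s L f r) m ↔ (l = [] ∧ r.1 ≤ m ∧ m ≤ r.2) ∨
      ∃ a t, l = a :: t ∧ s + σ a * L ≤ m ∧ t ∈ bag k (f (σ a)) (m - (s + σ a * L)) := by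
  cases l with
  | nil => simp [mem_bag, node]
  | cons a t =>
    simp only [mem_bag, cons_mem_verts_succ, node, reduceCtorEq, false_and, List.cons.injEq,
      false_or]
    constructor
    · rintro ⟨ht, hlo, hhi⟩
      exact ⟨a, t, ⟨rfl, rfl⟩, by omega, ht, by omega, by omega⟩
    · rintro ⟨_, _, ⟨rfl, rfl⟩, hs, ht, hlo, hhi⟩
      exact ⟨ht, by omega, by omega⟩

lemma fits_node (hf : ∀ p, Fits k L (f p)) (hr : r.1 ≤ r.2) {L' : ℕ} (hr' : r.2 < L')
    (hL : s + 3 * L ≤ L') : Fits (k + 1) L' (node σ s L f r) := by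
  rintro (_ | ⟨a, t⟩) hl
  · exact ⟨hr, hr'⟩
  · have := hf (σ a) t (cons_mem_verts_succ.1 hl)
    have : (σ a : ℕ) * L ≤ 2 * L := Nat.mul_le_mul_right _ (by omega)
    simp only [node]
    omega

lemma card_bag_node_le (hf : ∀ p, Fits k L (f p)) (p : Fin 3) {m : ℕ} (hm : s + p * L ≤ m)
    (hm' : m < s + p * L + L) :
    (bag (k + 1) (node σ s L f r) m).card ≤
      (if r.1 ≤ m ∧ m ≤ r.2 then 1 else 0) + (bag k (f p) (m - (s + p * L))).card := by
  have hsub : bag (k + 1) (node σ s L f r) m ⊆ (if r.1 ≤ m ∧ m ≤ r.2 then {[]} else ∅) ∪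
      (bag k (f p) (m - (s + p * L))).map ⟨List.cons (σ.symm p), List.cons_injective⟩ := by
    intro l hl
    rcases mem_bag_node.1 hl with ⟨rfl, hr⟩ | ⟨a, t, rfl, ha, ht⟩
    · simp [hr]
    · obtain ⟨htv, -, hhi⟩ := mem_bag.1 ht
      have hlt := (hf (σ a) t htv).2
      have hap : σ a = p := by
        have h₁ : (m - s) / L = σ a := Nat.div_eq_of_lt_le (by omega) (by rw [add_mul]; omega)
        have h₂ : (m - s) / L = p := Nat.div_eq_of_lt_le (by omega) (by rw [add_mul]; omega)
        exact Fin.ext (h₁.symm.trans h₂)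
      subst hap
      simp [ht]
  refine (Finset.card_le_card hsub).trans ((Finset.card_union_le _ _).trans ?_)
  split_ifs <;> simp

lemma card_bag_node_le_of_outside_blocks (hf : ∀ p, Fits k L (f p)) {m : ℕ}
    (hm : m < s ∨ s + 3 * L ≤ m) :
    (bag (k + 1) (node σ s L f r) m).card ≤ if r.1 ≤ m ∧ m ≤ r.2 then 1 else 0 := by
  have hsub : bag (k + 1) (node σ s L f r) m ⊆ if r.1 ≤ m ∧ m ≤ r.2 then {[]} else ∅ := by
    intro l hl
    rcases mem_bag_node.1 hl with ⟨rfl, hr⟩ | ⟨a, t, rfl, ha, ht⟩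
    · simp [hr]
    · obtain ⟨htv, -, hhi⟩ := mem_bag.1 ht
      have := (hf (σ a) t htv).2
      have : (σ a : ℕ) * L ≤ 2 * L := Nat.mul_le_mul_right _ (by omega)
      omega
  refine (Finset.card_le_card hsub).trans ?_
  split_ifs <;> simp

lemma card_bag_node_le_add (hf : ∀ p, Fits k L (f p)) {w : ℕ}
    (hw : ∀ p j, (bag k (f p) j).card ≤ w) (m : ℕ) :
    (bag (k + 1) (node σ s L f r) m).card ≤ (if r.1 ≤ m ∧ m ≤ r.2 then 1 else 0) + w := by
  by_cases hblock : s ≤ m ∧ m < s + 3 * L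
  · have hp : (m - s) / L < 3 := Nat.div_lt_of_lt_mul (by omega)
    have := Nat.div_mul_le_self (m - s) L
    have := Nat.lt_div_mul_add (a := m - s) (b := L) (by omega)
    exact (card_bag_node_le hf ⟨(m - s) / L, hp⟩ (by simp; omega) (by simp; omega)).trans
      (Nat.add_le_add_left (hw _ _) _)
  · exact (card_bag_node_le_of_outside_blocks hf (by omega)).trans (Nat.le_add_right _ _)

end node

-- Three blocks for the subtrees, and the first and last slot, where the root of `full` is alone.
def slots : ℕ → ℕ
  | 0 => 3
  | k + 1 => 3 * slots k + 2

lemma three_le_slots : ∀ k, 3 ≤ slots k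
  | 0 => le_rfl
  | k + 1 => by have := three_le_slots k; simp only [slots]; omega

/-- The root spans all `slots k` slots and is alone in the first and the last one. -/
def full : ℕ → List (Fin 3) → ℕ × ℕ
  | 0 => fun l => if l = [] then (0, 2) else (1, 1)
  | k + 1 => node 1 1 (slots k) (fun _ => full k) (0, 3 * slots k + 1)

lemma full_nil : ∀ k, full k [] = (0, slots k - 1)
  | 0 => rfl
  | k + 1 => by simp [full, node, slots]

lemma fits_full : ∀ k, Fits k (slots k) (full k)
  | 0 => by
    intro l hl
    simp only [verts, Finset.mem_insert, Finset.mem_singleton] at hl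
    rcases hl with rfl | rfl <;> simp [full, slots]
  | k + 1 => fits_node (fun _ => fits_full k) (by simp) (by simp [slots]) (by simp [slots]; omega)

lemma overlap_full : ∀ k (l : List (Fin 3)) (a : Fin 3), l ++ [a] ∈ verts k →
    Overlap (full k l) (full k (l ++ [a]))
  | 0, l, a, h => by
    obtain ⟨rfl, rfl⟩ := eq_nil_of_append_mem_verts_zero h
    simp [full, Overlap]
  | k + 1, [], a, _ => by
    have := three_le_slots k
    have : (a : ℕ) * slots k ≤ 2 * slots k := Nat.mul_le_mul_right _ (by omega)
    simp only [full, List.nil_append, node, full_nil, Overlap, Equiv.Perm.coe_one, id]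
    omega
  | k + 1, b :: t, a, h => overlap_node_cons.2 (overlap_full k t a (by simpa using h))

lemma nil_mem_bag_full {m : ℕ} (hm : m < slots k) : [] ∈ bag k (full k) m :=
  mem_bag.2 ⟨nil_mem_verts k, by rw [full_nil]; omega⟩

lemma card_bag_full_le : ∀ k m, (bag k (full k) m).card ≤ k + 2
  | 0, m => (card_bag_zero _ m).elim (by omega) fun h => h.2.2
  | k + 1, m =>
    (card_bag_node_le_add (fun _ => fits_full k) (fun _ j => card_bag_full_le k j) m).trans
      (by split_ifs <;> omega)

lemma card_bag_full_le_one : ∀ k {m}, m = 0 ∨ m = slots k - 1 → (bag k (full k) m).card ≤ 1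
  | 0, m, hm => (card_bag_zero _ m).resolve_right fun h => by
    have := (mem_bag.1 h.2.1).2
    simp [full, slots] at this hm
    omega
  | k + 1, m, hm => (card_bag_node_le_of_outside_blocks (fun _ => fits_full k)
      (by simp only [slots] at hm; omega)).trans (by split_ifs <;> simp)

/-- The subtree below `c`, laid out by `g`, sits in the middle block between the two other
subtrees, laid out by `full`; the root spans the middle block and the slot on either side. -/
def glue (k : ℕ) (c : Fin 3) (g : List (Fin 3) → ℕ × ℕ) : List (Fin 3) → ℕ × ℕ :=
  node (Equiv.swap c 1) 0 (slots k) (fun p => if p = 1 then g else full k)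
    (slots k - 1, 2 * slots k)

section glue

variable {c : Fin 3} {g : List (Fin 3) → ℕ × ℕ}

lemma fits_glue_block (hg : Fits k (slots k) g) (p : Fin 3) :
    Fits k (slots k) (if p = 1 then g else full k) := by
  split_ifs
  exacts [hg, fits_full k]

lemma fits_glue (hg : Fits k (slots k) g) : Fits (k + 1) (slots (k + 1)) (glue k c g) := by
  have := three_le_slots k
  exact fits_node (fits_glue_block hg) (by simp; omega) (by simp [slots]; omega) (by simp [slots])

lemma overlap_glue_nil (hg : Fits k (slots k) g) (a : Fin 3) :
    Overlap (glue k c g []) (glue k c g [a]) := by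
  have := three_le_slots k
  have : ((Equiv.swap c 1 a : Fin 3) : ℕ) * slots k ≤ 2 * slots k :=
    Nat.mul_le_mul_right _ (by omega)
  simp only [glue, node, Overlap]
  split_ifs with h
  · have := hg [] (nil_mem_verts k)
    simp only [h, Fin.val_one, one_mul]
    omega
  · rw [full_nil]
    omega

lemma card_bag_glue_le_middle (hg : Fits k (slots k) g) {m : ℕ} (hm : slots k ≤ m)
    (hm' : m < 2 * slots k) :
    (bag (k + 1) (glue k c g) m).card ≤ 1 + (bag k g (m - slots k)).card := by
  have := card_bag_node_le (fits_glue_block hg) (σ := Equiv.swap c 1)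
    (r := (slots k - 1, 2 * slots k)) (s := 0) (m := m) 1 (by simpa using hm) (by simp; omega)
  simp only [zero_add, Fin.val_one, one_mul, if_true] at this
  exact this.trans (by split_ifs <;> omega)

lemma mem_bag_glue_middle {m : ℕ} (hm : slots k ≤ m) {t : List (Fin 3)}
    (ht : t ∈ bag k g (m - slots k)) : c :: t ∈ bag (k + 1) (glue k c g) m :=
  mem_bag_node.2 (Or.inr ⟨c, t, rfl, by simpa using hm, by simpa using ht⟩)

lemma nil_mem_bag_glue_middle {m : ℕ} (hm : slots k ≤ m) (hm' : m < 2 * slots k) :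
    [] ∈ bag (k + 1) (glue k c g) m :=
  mem_bag_node.2 (Or.inl ⟨rfl, by simp; omega, by simpa using hm'.le⟩)

lemma card_bag_glue_le (hg : Fits k (slots k) g) (hgw : ∀ j, (bag k g j).card ≤ k + 2) {m : ℕ}
    (hm : m < slots k ∨ 2 * slots k ≤ m) : (bag (k + 1) (glue k c g) m).card ≤ k + 2 := by
  have := three_le_slots k
  have hw : ∀ (p : Fin 3) j, (bag k (if p = 1 then g else full k) j).card ≤ k + 2 := fun p j => by
    split_ifs
    exacts [hgw j, card_bag_full_le k j]
  by_cases hr : slots k - 1 ≤ m ∧ m ≤ 2 * slots k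
  · obtain rfl | rfl : m = slots k - 1 ∨ m = 2 * slots k := by omega
    · have h := card_bag_node_le (fits_glue_block hg) (σ := Equiv.swap c 1)
        (r := (slots k - 1, 2 * slots k)) (s := 0) (m := slots k - 1) 0 (by simp) (by simp; omega)
      simp only [Fin.isValue, Fin.val_zero, zero_mul, add_zero, Nat.sub_zero, zero_ne_one,
        if_false] at h
      have := card_bag_full_le_one k (Or.inr rfl)
      exact h.trans (by split_ifs; omega)
    · have h := card_bag_node_le (fits_glue_block hg) (σ := Equiv.swap c 1)
        (r := (slots k - 1, 2 * slots k)) (s := 0) (m := 2 * slots k) 2 (by simp) (by simp; omega)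
      simp only [Fin.isValue, Fin.val_two, zero_add, show (2 : Fin 3) ≠ 1 by decide,
        if_false] at h
      rw [Nat.sub_self] at h
      have := card_bag_full_le_one k (Or.inl rfl)
      exact h.trans (by split_ifs; omega)
  · have h := card_bag_node_le_add (fits_glue_block hg) (σ := Equiv.swap c 1)
      (r := (slots k - 1, 2 * slots k)) (s := 0) hw m
    rwa [if_neg hr, zero_add] at h

end glue

/-- The subtrees below the children other than `c` are joined through the root, which occupies
just the slot on either side of the junction; the subtree below `c` comes last. -/
def cut (k : ℕ) (c : Fin 3) : List (Fin 3) → ℕ × ℕ :=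
  node (Equiv.swap c 2) 0 (slots k) (fun _ => full k) (slots k - 1, slots k)

lemma fits_cut (c : Fin 3) : Fits (k + 1) (slots (k + 1)) (cut k c) := by
  have := three_le_slots k
  exact fits_node (fun _ => fits_full k) (by simp) (by simp [slots]; omega) (by simp [slots])

lemma overlap_cut_nil {a c : Fin 3} (hac : a ≠ c) : Overlap (cut k c []) (cut k c [a]) := by
  have hpos : (Equiv.swap c 2 a : ℕ) ≤ 1 := by
    have : Equiv.swap c 2 a ≠ 2 := by
      rw [Ne, Equiv.swap_apply_eq_iff, Equiv.swap_apply_right]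
      exact hac
    omega
  have := three_le_slots k
  have : ((Equiv.swap c 2 a : Fin 3) : ℕ) * slots k ≤ slots k :=
    (Nat.mul_le_mul_right _ hpos).trans (by simp)
  simp only [cut, node, Overlap, full_nil]
  omega

lemma card_bag_cut_le (c : Fin 3) (m : ℕ) : (bag (k + 1) (cut k c) m).card ≤ k + 2 := by
  have := three_le_slots k
  by_cases hr : slots k - 1 ≤ m ∧ m ≤ slots k
  · obtain rfl | rfl : m = slots k - 1 ∨ m = slots k := by omega
    · have h := card_bag_node_le (fun _ => fits_full k) (σ := Equiv.swap c 2)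
        (r := (slots k - 1, slots k)) (s := 0) (m := slots k - 1) 0 (by simp) (by simp; omega)
      simp only [Fin.isValue, Fin.val_zero, zero_mul, add_zero, Nat.sub_zero] at h
      have := card_bag_full_le_one k (Or.inr rfl)
      exact h.trans (by split_ifs; omega)
    · have h := card_bag_node_le (fun _ => fits_full k) (σ := Equiv.swap c 2)
        (r := (slots k - 1, slots k)) (s := 0) (m := slots k) 1 (by simp) (by simp; omega)
      simp only [Fin.isValue, Fin.val_one, one_mul, zero_add] at h
      rw [Nat.sub_self] at h
      have := card_bag_full_le_one k (Or.inl rfl)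
      exact h.trans (by split_ifs; omega)
  · have h := card_bag_node_le_add (fun _ => fits_full k) (σ := Equiv.swap c 2)
      (r := (slots k - 1, slots k)) (s := 0) (fun _ j => card_bag_full_le k j) m
    rwa [if_neg hr, zero_add] at h

def deleteLayout : ℕ → List (Fin 3) → Fin 3 → List (Fin 3) → ℕ × ℕ
  | 0, _, _ => fun l => if l = [] then (0, 0) else (1, 1)
  | k + 1, [], d => cut k d
  | k + 1, c :: x, d => glue k c (deleteLayout k x d)

lemma fits_deleteLayout : ∀ k x d, Fits k (slots k) (deleteLayout k x d)
  | 0, x, d => by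
    intro l hl
    by_cases h : l = [] <;> simp [deleteLayout, h, slots]
  | k + 1, [], d => fits_cut d
  | k + 1, c :: x, d => fits_glue (fits_deleteLayout k x d)

lemma overlap_deleteLayout : ∀ k (x : List (Fin 3)) (d : Fin 3), x ++ [d] ∈ verts k →
    ∀ l a, l ++ [a] ∈ verts k → (l, a) ≠ (x, d) →
      Overlap (deleteLayout k x d l) (deleteLayout k x d (l ++ [a]))
  | 0, x, d, hx, l, a, hl, hne => by
    obtain ⟨rfl, rfl⟩ := eq_nil_of_append_mem_verts_zero hl
    obtain ⟨rfl, rfl⟩ := eq_nil_of_append_mem_verts_zero hx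
    exact absurd rfl hne
  | k + 1, [], d, _, [], a, _, hne => overlap_cut_nil (by simpa using hne)
  | k + 1, [], d, _, b :: t, a, hl, _ =>
    overlap_node_cons.2 (overlap_full k t a (by simpa using hl))
  | k + 1, c :: x, d, _, [], a, _, _ => overlap_glue_nil (fits_deleteLayout k x d) a
  | k + 1, c :: x, d, hx, b :: t, a, hl, hne => by
    refine overlap_node_cons.2 ?_
    split_ifs with hb
    · obtain rfl : b = c := by simpa [Equiv.swap_apply_eq_iff] using hb
      exact overlap_deleteLayout k x d (by simpa using hx) t a (by simpa using hl)
        (by simpa using hne)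
    · exact overlap_full k t a (by simpa using hl)

lemma card_bag_deleteLayout_le : ∀ k x d m, (bag k (deleteLayout k x d) m).card ≤ k + 1
  | 0, x, d, m => (card_bag_zero _ m).resolve_right fun h => by
    have h₀ := (mem_bag.1 h.1).2
    have h₁ := (mem_bag.1 h.2.1).2
    simp [deleteLayout] at h₀ h₁
    omega
  | k + 1, [], d, m => card_bag_cut_le d m
  | k + 1, c :: x, d, m => by
    by_cases hm : slots k ≤ m ∧ m < 2 * slots k
    · have := card_bag_glue_le_middle (c := c) (fits_deleteLayout k x d) hm.1 hm.2
      have := card_bag_deleteLayout_le k x d (m - slots k)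
      simp only [deleteLayout]
      omega
    · exact card_bag_glue_le (fits_deleteLayout k x d)
        (fun j => (card_bag_deleteLayout_le k x d j).trans (Nat.le_succ _)) (by omega)

def contractLayout : ℕ → List (Fin 3) → Fin 3 → List (Fin 3) → ℕ × ℕ
  | 0, _, _ => full 0
  | k + 1, [], d => glue k d (full k)
  | k + 1, c :: x, d => glue k c (contractLayout k x d)

lemma fits_contractLayout : ∀ k x d, Fits k (slots k) (contractLayout k x d)
  | 0, _, _ => fits_full 0
  | k + 1, [], _ => fits_glue (fits_full k)
  | k + 1, _ :: x, d => fits_glue (fits_contractLayout k x d)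

lemma overlap_contractLayout : ∀ k (x : List (Fin 3)) (d : Fin 3) l a, l ++ [a] ∈ verts k →
    Overlap (contractLayout k x d l) (contractLayout k x d (l ++ [a]))
  | 0, _, _, l, a, hl => overlap_full 0 l a hl
  | k + 1, [], _, [], a, _ => overlap_glue_nil (fits_full k) a
  | k + 1, [], _, b :: t, a, hl => by
    refine overlap_node_cons.2 ?_
    split_ifs <;> exact overlap_full k t a (by simpa using hl)
  | k + 1, _ :: x, d, [], a, _ => overlap_glue_nil (fits_contractLayout k x d) a
  | k + 1, _ :: x, d, b :: t, a, hl => by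
    refine overlap_node_cons.2 ?_
    split_ifs
    · exact overlap_contractLayout k x d t a (by simpa using hl)
    · exact overlap_full k t a (by simpa using hl)

lemma card_bag_contractLayout : ∀ k (x : List (Fin 3)) (d : Fin 3), x ++ [d] ∈ verts k → ∀ m,
    (bag k (contractLayout k x d) m).card ≤ k + 1 ∨
      (x ∈ bag k (contractLayout k x d) m ∧ x ++ [d] ∈ bag k (contractLayout k x d) m ∧
        (bag k (contractLayout k x d) m).card ≤ k + 2)
  | 0, x, d, hx, m => by
    obtain ⟨rfl, rfl⟩ := eq_nil_of_append_mem_verts_zero hx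
    exact card_bag_zero _ m
  | k + 1, [], d, _, m => by
    by_cases hm : slots k ≤ m ∧ m < 2 * slots k
    · have := card_bag_glue_le_middle (c := d) (fits_full k) hm.1 hm.2
      have := card_bag_full_le k (m - slots k)
      refine Or.inr ⟨nil_mem_bag_glue_middle hm.1 hm.2, mem_bag_glue_middle hm.1
        (nil_mem_bag_full (by omega)), by simp only [contractLayout]; omega⟩
    · exact Or.inl (card_bag_glue_le (fits_full k) (card_bag_full_le k) (by omega))
  | k + 1, c :: x, d, hx, m => by
    have ih := card_bag_contractLayout k x d (by simpa using hx)
    by_cases hm : slots k ≤ m ∧ m < 2 * slots k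
    · have := card_bag_glue_le_middle (c := c) (fits_contractLayout k x d) hm.1 hm.2
      rcases ih (m - slots k) with h | ⟨hx', hd', h⟩
      · exact Or.inl (by simp only [contractLayout]; omega)
      · exact Or.inr ⟨mem_bag_glue_middle hm.1 hx', mem_bag_glue_middle hm.1 hd',
          by simp only [contractLayout]; omega⟩
    · refine Or.inl (card_bag_glue_le (fits_contractLayout k x d) (fun j => ?_) (by omega))
      rcases ih j with h | h
      · omega
      · exact h.2.2

def addr : TildeTVert k ↪ List (Fin 3) :=
  ⟨Subtype.val, Subtype.val_injective⟩

def toPathDecomp {G : SimpleGraph (TildeTVert k)} {L : ℕ} (f : List (Fin 3) → ℕ × ℕ)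
    (hf : Fits k L f) (hG : ∀ u v, G.Adj u v → Overlap (f u.1) (f v.1)) : PathDecomp G :=
  PathDecomp.ofIntervals (fun v => (f v.1).1) (fun v => (f v.1).2)
    (fun v => (hf _ (val_mem_verts v)).1) hG

section toPathDecomp

variable {G : SimpleGraph (TildeTVert k)} {L : ℕ} {f : List (Fin 3) → ℕ × ℕ} (hf : Fits k L f)
  (hG : ∀ u v, G.Adj u v → Overlap (f u.1) (f v.1)) (i : Fin (toPathDecomp f hf hG).n)

lemma map_bag_toPathDecomp :
    ((toPathDecomp f hf hG).bag i).map addr = bag k f i := by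
  ext l
  simp only [toPathDecomp, PathDecomp.ofIntervals, Finset.mem_map, Finset.mem_filter,
    Finset.mem_univ, true_and, mem_bag]
  constructor
  · rintro ⟨v, hv, rfl⟩
    exact ⟨val_mem_verts v, hv⟩
  · rintro ⟨hl, hv⟩
    exact ⟨⟨l, mem_verts_iff.1 hl⟩, hv, rfl⟩

lemma card_bag_toPathDecomp : ((toPathDecomp f hf hG).bag i).card = (bag k f i).card := by
  rw [← map_bag_toPathDecomp, Finset.card_map]

lemma mem_bag_toPathDecomp {v : TildeTVert k} :
    v ∈ (toPathDecomp f hf hG).bag i ↔ v.1 ∈ bag k f i := by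
  rw [← map_bag_toPathDecomp]
  exact (Finset.mem_map' addr).symm

end toPathDecomp

lemma overlap_of_adj {f : List (Fin 3) → ℕ × ℕ}
    (hf : ∀ l a, l ++ [a] ∈ verts k → Overlap (f l) (f (l ++ [a]))) {u v : TildeTVert k}
    (h : (tildeT k).Adj u v) : Overlap (f u.1) (f v.1) := by
  rcases adj_iff.1 h with ⟨a, ha⟩ | ⟨a, ha⟩
  · rw [ha]
    exact hf _ _ (ha ▸ val_mem_verts v)
  · rw [ha]
    exact (hf _ _ (ha ▸ val_mem_verts u)).symm

theorem pathwidth_le (k : ℕ) : pathwidth (tildeT k) ≤ k + 1 :=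
  (toPathDecomp (full k) (fits_full k) fun _ _ => overlap_of_adj (overlap_full k)).pathwidth_le
    fun i => by
      rw [card_bag_toPathDecomp]
      exact card_bag_full_le k i

lemma pathwidth_deleteEdges_le_of_eq_append {x y : TildeTVert k} {d : Fin 3}
    (hy : y.1 = x.1 ++ [d]) : pathwidth ((tildeT k).deleteEdges {s(x, y)}) ≤ k := by
  have hx : x.1 ++ [d] ∈ verts k := hy ▸ val_mem_verts y
  have hG : ∀ u v, ((tildeT k).deleteEdges {s(x, y)}).Adj u v →
      Overlap (deleteLayout k x.1 d u.1) (deleteLayout k x.1 d v.1) := by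
    intro u v huv
    rw [SimpleGraph.deleteEdges_adj, Set.mem_singleton_iff] at huv
    rcases adj_iff.1 huv.1 with ⟨a, ha⟩ | ⟨a, ha⟩
    · rw [ha]
      refine overlap_deleteLayout k _ d hx _ _ (ha ▸ val_mem_verts v) fun he => huv.2 ?_
      obtain ⟨hux, rfl⟩ := Prod.mk.inj he
      rw [Subtype.ext hux, Subtype.ext (ha.trans (hux ▸ hy.symm))]
    · rw [ha]
      refine (overlap_deleteLayout k _ d hx _ _ (ha ▸ val_mem_verts u) fun he => huv.2 ?_).symm
      obtain ⟨hvx, rfl⟩ := Prod.mk.inj he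
      rw [Subtype.ext hvx, Subtype.ext (ha.trans (hvx ▸ hy.symm)), Sym2.eq_swap]
  refine (toPathDecomp (deleteLayout k x.1 d) (fits_deleteLayout k x.1 d) hG).pathwidth_le
    fun i => ?_
  rw [card_bag_toPathDecomp]
  exact card_bag_deleteLayout_le k x.1 d i

theorem pathwidth_deleteEdges_le {x y : TildeTVert k} (hxy : (tildeT k).Adj x y) :
    pathwidth ((tildeT k).deleteEdges {s(x, y)}) ≤ k := by
  rcases adj_iff.1 hxy with ⟨d, hd⟩ | ⟨d, hd⟩
  · exact pathwidth_deleteEdges_le_of_eq_append hd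
  · rw [Sym2.eq_swap]
    exact pathwidth_deleteEdges_le_of_eq_append hd

lemma exists_saturated_pathDecomp_of_eq_append {x y : TildeTVert k} {d : Fin 3}
    (hy : y.1 = x.1 ++ [d]) :
    ∃ P : PathDecomp (tildeT k), ∀ i,
      (P.bag i).card ≤ k + 1 ∨ (x ∈ P.bag i ∧ y ∈ P.bag i ∧ (P.bag i).card ≤ k + 2) := by
  refine ⟨toPathDecomp (contractLayout k x.1 d) (fits_contractLayout k x.1 d)
    fun _ _ => overlap_of_adj (overlap_contractLayout k x.1 d), fun i => ?_⟩
  simp only [card_bag_toPathDecomp, mem_bag_toPathDecomp, hy]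
  exact card_bag_contractLayout k x.1 d (hy ▸ val_mem_verts y) i

theorem exists_saturated_pathDecomp {x y : TildeTVert k} (hxy : (tildeT k).Adj x y) :
    ∃ P : PathDecomp (tildeT k), ∀ i,
      (P.bag i).card ≤ k + 1 ∨ (x ∈ P.bag i ∧ y ∈ P.bag i ∧ (P.bag i).card ≤ k + 2) := by
  rcases adj_iff.1 hxy with ⟨d, hd⟩ | ⟨d, hd⟩
  · exact exists_saturated_pathDecomp_of_eq_append hd
  · obtain ⟨P, hP⟩ := exists_saturated_pathDecomp_of_eq_append hd
    exact ⟨P, fun i => (hP i).imp_right fun h => ⟨h.2.1, h.1, h.2.2⟩⟩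

end TildeT

/-- `𝕋̃^k` is a minor-minimal obstruction to pathwidth `k`: its pathwidth is
`k + 1` and every proper minor has pathwidth at most `k`. -/
theorem tildeT_isPWObstruction (k : ℕ) :
    pathwidth (tildeT k) = k + 1 ∧
      ∀ (W : Type) (H : SimpleGraph W), IsProperMinor H (tildeT k) → pathwidth H ≤ k := by
  refine ⟨le_antisymm (TildeT.pathwidth_le k) (TildeT.le_pathwidth k), ?_⟩
  rintro W H ⟨⟨M⟩, hproper⟩
  by_cases hthick : ∃ w, ∃ x ∈ M.branch w, ∃ y ∈ M.branch w, (tildeT k).Adj x y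
  · obtain ⟨w, x, hx, y, hy, hxy⟩ := hthick
    obtain ⟨P, hP⟩ := TildeT.exists_saturated_pathDecomp hxy
    exact M.pathwidth_le_of_saturated P hx hy hxy.ne hP
  push Not at hthick
  by_cases hspare : ∃ x y, (tildeT k).Adj x y ∧
      ∀ w w', H.Adj w w' → x ∈ M.branch w → y ∉ M.branch w'
  · obtain ⟨x, y, hxy, hunused⟩ := hspare
    have hsep : ∀ w, x ∈ M.branch w → y ∉ M.branch w := fun w hx hy => hthick w x hx y hy hxy
    exact ((M.deleteEdge hsep hunused).pathwidth_le).trans (TildeT.pathwidth_deleteEdges_le hxy)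
  push Not at hspare
  exact (hproper.false (M.nonempty_iso hthick hspare TildeT.exists_adj).some).elim
end
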